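/- Let G be a connected simple graph on a finite nonempty vertex set V, and suppose a word w = u ++ X ++ X ++ v represents G, where X is a word of length at least 2 (so that XX is a non-trivial square) and u, v are possibly empty words. If x and y are adjacent vertices of G, then the number of occurrences of x in X equals the number of occurrences of y in X. -/

import Mathlib

variable {V : Type*} [DecidableEq V]

/-- Distinct letters `x` and `y` alternate in `w`: deleting all other letters
leaves no two equal consecutive letters. -/
def Alternates (x y : V) (w : List V) : Prop :=
  (w.filter fun z => decide (z = x ∨ z = y)).Chain' (· ≠ ·)

/-- `w` represents the graph `G`: every vertex occurs in `w`, and distinct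
vertices alternate in `w` iff they are adjacent in `G`. -/
def Represents (G : SimpleGraph V) (w : List V) : Prop :=
  (∀ v : V, v ∈ w) ∧ ∀ x y : V, x ≠ y → (Alternates x y w ↔ G.Adj x y)

/-- `w` contains a square. -/
def HasSquare (w : List V) : Prop :=
  ∃ u X v : List V, X ≠ [] ∧ w = u ++ X ++ X ++ v

/-- `w` is square-free. -/
def SqFree (w : List V) : Prop := ¬ HasSquare w


private lemma alt_count_le {V : Type*} [DecidableEq V] {x y : V} (hxy : x ≠ y) :
    ∀ l : List V, l.Chain' (· ≠ ·) → (∀ z ∈ l, z = x ∨ z = y) →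
      l.count x ≤ l.count y + 1
  | [] => by simp
  | [a] => by
    intro _ hm
    rcases hm a (by simp) with h | h <;> subst h <;>
      simp [List.count_singleton, hxy, hxy.symm]
  | a :: b :: t => by
    intro hc hm
    have hab : a ≠ b := hc.rel_head
    have hct : t.Chain' (· ≠ ·) := (hc.tail).tail
    have hmt : ∀ z ∈ t, z = x ∨ z = y := fun z hz => hm z (by simp [hz])
    have ih := alt_count_le hxy t hct hmt
    rcases hm a (by simp) with ha | ha <;> rcases hm b (by simp) with hb | hb <;>
      subst ha <;> subst hb <;> simp_all [List.count_cons, hxy, hxy.symm] <;> omega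

theorem square_adjacent_equal_counts {V : Type*} [DecidableEq V] [Fintype V] [Nonempty V]
    (G : SimpleGraph V) (hconn : G.Connected)
    (u X v : List V) (hX : 2 ≤ X.length)
    (hrep : Represents G (u ++ X ++ X ++ v))
    (x y : V) (hadj : G.Adj x y) :
    X.count x = X.count y := by
  have hne : x ≠ y := G.ne_of_adj hadj
  have halt : Alternates x y (u ++ X ++ X ++ v) := (hrep.2 x y hne).mpr hadj
  set p : V → Bool := fun z => decide (z = x ∨ z = y) with hp
  set f : List V := X.filter p with hf
  have hsplit : (u ++ X ++ X ++ v).filter p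
      = u.filter p ++ f ++ f ++ v.filter p := by
    simp [hf, List.filter_append]
  have hinfix : (f ++ f) <:+: (u ++ X ++ X ++ v).filter p := by
    rw [hsplit]
    exact ⟨u.filter p, v.filter p, by simp⟩
  have hchain : (f ++ f).Chain' (· ≠ ·) := halt.infix hinfix
  have hmem : ∀ z ∈ f ++ f, z = x ∨ z = y := by
    intro z hz
    rcases List.mem_append.mp hz with h | h <;> simp only [hf, hp, List.mem_filter, decide_eq_true_eq] at h <;>
      exact h.2
  have h1 := alt_count_le hne (f ++ f) hchain hmem
  have h2 := alt_count_le hne.symm (f ++ f) hchain (fun z hz => (hmem z hz).symm)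
  have hcx : f.count x = X.count x := List.count_filter (by simp [hp])
  have hcy : f.count y = X.count y := List.count_filter (by simp [hp])
  simp only [List.count_append, hcx, hcy] at h1 h2
  omega
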